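/- arXiv:solv-int/9809011 — 2 statements merged into one kernel-verified Lean document; each statement's English description precedes it below -/
import Mathlib

section
/- Let R be a commutative differential ring with derivation ∂, and let H_{-2}, E_{-1}, F_{-1}, H_0 ∈ R. Set L = p_{-3} + H_{-2}·h_{-2} + E_{-1}·e_{-1} + F_{-1}·f_{-1} + H_0·h_0 and n_0 = I + H_{-2}·f_1 where f_1 = [[0,0],[λ^{-1},0]]. Then the gauge transform n_0·L·n_0^{-1} - (∂n_0)·n_0^{-1} has vanishing h_{-2}-component: there exist E', F', H' ∈ R and F_1' ∈ R such that n_0·L·n_0^{-1} - (∂ n_0)·n_0^{-1} = p_{-3} + E'·e_{-1} + F'·f_{-1} + H'·h_0 + F_1'·f_1. -/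
variable {R : Type*} [CommRing R]

/-- `λ^k` in `R((λ⁻¹))` (Laurent series in `t = λ⁻¹`). -/
noncomputable def lamR (R : Type*) [CommRing R] (k : ℤ) : LaurentSeries R :=
  HahnSeries.single (-k) (1 : R)

noncomputable def cst {R : Type*} [CommRing R] (a : R) : LaurentSeries R := HahnSeries.C a

noncomputable def pm3 (R : Type*) [CommRing R] : Matrix (Fin 2) (Fin 2) (LaurentSeries R) :=
  !![0, lamR R 2; lamR R 1, 0]
noncomputable def hm2 (R : Type*) [CommRing R] : Matrix (Fin 2) (Fin 2) (LaurentSeries R) :=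
  !![lamR R 1, 0; 0, -lamR R 1]
noncomputable def em1 (R : Type*) [CommRing R] : Matrix (Fin 2) (Fin 2) (LaurentSeries R) :=
  !![0, lamR R 1; 0, 0]
noncomputable def fm1 (R : Type*) [CommRing R] : Matrix (Fin 2) (Fin 2) (LaurentSeries R) :=
  !![0, 0; 1, 0]
noncomputable def h0 (R : Type*) [CommRing R] : Matrix (Fin 2) (Fin 2) (LaurentSeries R) :=
  !![1, 0; 0, -1]
noncomputable def f1 (R : Type*) [CommRing R] : Matrix (Fin 2) (Fin 2) (LaurentSeries R) :=
  !![0, 0; lamR R (-1), 0]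

lemma cst_add' (a b : R) : cst (a + b) = cst a + cst b := map_add HahnSeries.C a b
lemma cst_sub' (a b : R) : cst (a - b) = cst a - cst b := map_sub HahnSeries.C a b
lemma cst_mul' (a b : R) : cst (a * b) = cst a * cst b := map_mul HahnSeries.C a b
lemma lam_inv_mul : lamR R (-1) * lamR R 1 = 1 := by
  simp [lamR, HahnSeries.single_mul_single]
lemma lam_two : lamR R 2 = lamR R 1 * lamR R 1 := by
  simp [lamR, HahnSeries.single_mul_single]

set_option maxHeartbeats 1600000 in
/-- The gauge transform of `L` by `n₀ = I + H_{-2}·f₁` kills the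
`h_{-2}`-component: it is of the form
`p_{-3} + E'·e_{-1} + F'·f_{-1} + H'·h₀ + F₁'·f₁`. -/
theorem gauge_kills_hm2_component (d : R → R)
    (hd_add : ∀ a b, d (a + b) = d a + d b)
    (hd_mul : ∀ a b, d (a * b) = a * d b + b * d a)
    (H2 E F H0' : R) :
    letI L : Matrix (Fin 2) (Fin 2) (LaurentSeries R) :=
      pm3 R + cst H2 • hm2 R + cst E • em1 R + cst F • fm1 R + cst H0' • h0 R
    letI n0 : Matrix (Fin 2) (Fin 2) (LaurentSeries R) := 1 + cst H2 • f1 R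
    letI n0inv : Matrix (Fin 2) (Fin 2) (LaurentSeries R) := 1 - cst H2 • f1 R
    ∃ E' F' H' F1' : R,
      n0 * L * n0inv - (cst (d H2) • f1 R) * n0inv =
        pm3 R + cst E' • em1 R + cst F' • fm1 R + cst H' • h0 R + cst F1' • f1 R := by
  refine ⟨E, F + H2*H2, H0' - H2*E, H2*H0' + H2*H0' - H2*H2*E - d H2, ?_⟩
  have hml : lamR R (-1) * lamR R 1 = 1 := lam_inv_mul
  have h2l : lamR R 2 = lamR R 1 * lamR R 1 := lam_two
  refine Matrix.ext fun i j => ?_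
  fin_cases i <;> fin_cases j <;>
    simp [pm3, hm2, em1, fm1, h0, f1, Matrix.mul_apply, Fin.sum_univ_two,
      Matrix.one_apply, Matrix.vecMul, dotProduct, Matrix.sub_apply, cst_add',
      cst_sub', cst_mul']
  · linear_combination (-(cst H2 * lamR R 1) - cst H2 * cst E) * hml
      + (-(cst H2 * lamR R (-1))) * h2l
  · linear_combination (cst H2 * cst H2 - cst H2 * cst H2 * (lamR R (-1) * lamR R 1)
        - cst H2 * cst H2 * cst E * lamR R (-1)) * hml
      - (cst H2 * cst H2 * lamR R (-1) * lamR R (-1)) * h2l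
  · linear_combination (cst H2 * lamR R 1 + cst H2 * cst E) * hml
      + (cst H2 * lamR R (-1)) * h2l
end

section
/- Let R be a commutative differential ring with derivation ∂ and let H_{-2}, E_{-1}, F_{-1}, H_0 ∈ R. With n_1 = I - H_{-2}·e_1 where e_1 = [[0,1],[0,0]], the gauge transform n_1·L·n_1^{-1} - (∂n_1)·n_1^{-1} of L = p_{-3} + H_{-2}·h_{-2} + E_{-1}·e_{-1} + F_{-1}·f_{-1} + H_0·h_0 has the form p_{-3} + E''·e_{-1} + F''·f_{-1} + H''·h_0 + E_1''·e_1 for some E'', F'', H'', E_1'' ∈ R; i.e. the h_{-2}-component is eliminated. -/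
variable {R : Type*} [CommRing R]

noncomputable def e1 (R : Type*) [CommRing R] : Matrix (Fin 2) (Fin 2) (LaurentSeries R) :=
  !![0, 1; 0, 0]


lemma gauge_aux {A : Type*} [CommRing A] (l l2 a e f h dd : A) :
    (1 - a • !![(0:A), 1; 0, 0]) *
        (!![0, l2; l, 0] + a • !![l, 0; 0, -l] + e • !![0, l; 0, 0] +
          f • !![0, 0; 1, 0] + h • !![1, 0; 0, -1]) *
        (1 + a • !![(0:A), 1; 0, 0]) -
      (-dd • !![(0:A), 1; 0, 0]) * (1 + a • !![(0:A), 1; 0, 0]) =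
    !![0, l2; l, 0] + (e + a * a) • !![0, l; 0, 0] + f • !![0, 0; 1, 0] +
      (h - a * f) • !![(1:A), 0; 0, -1] +
      (a * h + a * h - a * a * f + dd) • !![(0:A), 1; 0, 0] := by
  ext i j
  fin_cases i <;> fin_cases j <;>
  · simp [Matrix.mul_apply, Matrix.vecMul, dotProduct, Fin.sum_univ_two]
    try ring

/-- The gauge transform of `L` by `n₁ = I - H_{-2}·e₁` kills the
`h_{-2}`-component: it is of the form
`p_{-3} + E''·e_{-1} + F''·f_{-1} + H''·h₀ + E₁''·e₁`. -/
theorem gauge_kills_hm2_component' (d : R → R)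
    (hd_add : ∀ a b, d (a + b) = d a + d b)
    (hd_mul : ∀ a b, d (a * b) = a * d b + b * d a)
    (H2 E F H0' : R) :
    letI L : Matrix (Fin 2) (Fin 2) (LaurentSeries R) :=
      pm3 R + cst H2 • hm2 R + cst E • em1 R + cst F • fm1 R + cst H0' • h0 R
    letI n1 : Matrix (Fin 2) (Fin 2) (LaurentSeries R) := 1 - cst H2 • e1 R
    letI n1inv : Matrix (Fin 2) (Fin 2) (LaurentSeries R) := 1 + cst H2 • e1 R
    ∃ E'' F'' H'' E1'' : R,
      n1 * L * n1inv - (-(cst (d H2)) • e1 R) * n1inv =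
        pm3 R + cst E'' • em1 R + cst F'' • fm1 R + cst H'' • h0 R + cst E1'' • e1 R := by
  refine ⟨E + H2 * H2, F, H0' - H2 * F, H2 * H0' + H2 * H0' - H2 * H2 * F + d H2, ?_⟩
  have h := gauge_aux (lamR R 1) (lamR R 2) (cst H2) (cst E) (cst F) (cst H0')
    (cst (d H2))
  simp only [pm3, hm2, em1, fm1, h0, e1, cst, map_add, map_mul, map_sub]
  simpa only [cst, map_add, map_mul, map_sub] using h
end
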